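/- Let κ be a regular cardinal, ⟨μ_i : i < κ⟩ a sequence of regular cardinals, D an ultrafilter on κ, and suppose (f̄, ḡ) is a cut of ∏_{i<κ} μ_i / D of cofinality (λ₁, λ₂), where λ₁, λ₂ are infinite regular cardinals. Then λ₁ ≤ 2^κ. -/

import Mathlib

/-!
Suppose `λ₁ > 2^κ`. In an unfilled cut every strict `<_D`-upper bound `u` of `f̄` has a smaller
one: otherwise `u` lies below every `g_ξ` and, changed on a null set, fills the cut. On the other
hand `f̄` has a minimal strict upper bound. To see this, round every `f_β` up coordinatewise to
sets `S_i` of at most `2^κ` ordinals containing `μ_i`. The rounded functions are `≤_D`-increasing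
and take at most `2^κ` values, so as `cf λ₁ > 2^κ` they are eventually constant mod `D`, and that
constant is a strict upper bound of `f̄`. If there were no minimal one, we could pick an upper bound
strictly below it, add its values to the `S_i`, and repeat for `2^κ` stages. For one `β` beyond
all the stabilisation points, the bound chosen at stage `x` lies strictly between `f_β` and its
stage-`x` rounding at some coordinate `i_x`, and bounds all later roundings of `f_β` there. Since
`2^κ > κ`, infinitely many stages share the same `i_x`, which yields an infinite decreasing
sequence of ordinals.
-/

/-- `f <_D g` iff the set of coordinates where `f` is below `g` lies in `D`. -/
def ltD {ι : Type*} (D : Ultrafilter ι) (f g : ι → Ordinal) : Prop :=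
  {i | f i < g i} ∈ D

/-- `(f, g)` is a cut of `∏ μ i / D` of cofinality `(λ₁, λ₂)`:
`f` is `<_D`-increasing of length `λ₁`, `g` is `<_D`-decreasing of length `λ₂`,
every `f α` is `<_D`-below every `g ξ`, all functions lie in `∏ μ i`, and
no `h ∈ ∏ μ i` lies strictly `<_D`-between all the `f α` and all the `g ξ`. -/
def IsCut {ι : Type*} (D : Ultrafilter ι) (μ : ι → Cardinal) (l₁ l₂ : Cardinal)
    (f : l₁.ord.ToType → ι → Ordinal) (g : l₂.ord.ToType → ι → Ordinal) : Prop :=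
  (∀ α i, f α i < (μ i).ord) ∧ (∀ ξ i, g ξ i < (μ i).ord) ∧
  (∀ α β, α < β → ltD D (f α) (f β)) ∧ (∀ ξ ζ, ξ < ζ → ltD D (g ζ) (g ξ)) ∧
  (∀ α ξ, ltD D (f α) (g ξ)) ∧
  ¬ ∃ h : ι → Ordinal, (∀ i, h i < (μ i).ord) ∧
      (∀ α, ltD D (f α) h) ∧ (∀ ξ, ltD D h (g ξ))

open Cardinal Filter Set

universe u w

section ltD

variable {ι : Type*} {D : Ultrafilter ι} {f g h : ι → Ordinal}

theorem ltD_iff_eventually : ltD D f g ↔ ∀ᶠ i in (D : Filter ι), f i < g i := Iff.rfl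

theorem ltD.eventuallyLE (hfg : ltD D f g) : f ≤ᶠ[(D : Filter ι)] g :=
  (ltD_iff_eventually.1 hfg).mono fun _ hi => hi.le

theorem ltD.trans_eventuallyLE (hfg : ltD D f g) (hgh : g ≤ᶠ[(D : Filter ι)] h) : ltD D f h :=
  (ltD_iff_eventually.1 hfg |>.and hgh).mono fun _ hi => hi.1.trans_le hi.2

theorem Filter.EventuallyLE.trans_ltD (hfg : f ≤ᶠ[(D : Filter ι)] g) (hgh : ltD D g h) :
    ltD D f h :=
  (hfg.and hgh).mono fun _ hi => hi.1.trans_lt hi.2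

theorem eventuallyLE_of_not_ltD (hfg : ¬ ltD D f g) : g ≤ᶠ[(D : Filter ι)] f :=
  (Ultrafilter.eventually_not.2 hfg).mono fun _ hi => not_lt.1 hi

end ltD

theorem exists_smaller_upperBound_of_unfilled {ι A B : Type*} [Preorder B] [Nonempty B]
    [NoMaxOrder B]
    {D : Ultrafilter ι} {μ : ι → Cardinal} {f : A → ι → Ordinal} {g : B → ι → Ordinal}
    (hgμ : ∀ ξ i, g ξ i < (μ i).ord) (hgmono : ∀ ξ ζ, ξ < ζ → ltD D (g ζ) (g ξ))
    (hfg : ∀ a ξ, ltD D (f a) (g ξ))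
    (hno : ¬ ∃ h : ι → Ordinal, (∀ i, h i < (μ i).ord) ∧
      (∀ a, ltD D (f a) h) ∧ (∀ ξ, ltD D h (g ξ)))
    {u : ι → Ordinal} (hu : ∀ a, ltD D (f a) u) :
    ∃ v, (∀ a, ltD D (f a) v) ∧ ltD D v u := by
  by_contra! hmin
  have hug : ∀ ξ, ltD D u (g ξ) := by
    intro ξ
    by_contra hgu
    obtain ⟨ζ, hξζ⟩ := exists_gt ξ
    exact hmin (g ζ) (hfg · ζ) ((hgmono ξ ζ hξζ).trans_eventuallyLE (eventuallyLE_of_not_ltD hgu))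
  obtain ⟨ξ₀⟩ := ‹Nonempty B›
  -- cutting `u` down to `min u (g ξ₀)` changes it only on a `D`-null set and puts it in `∏ μ i`
  have hmin_eq : (fun i => min (u i) (g ξ₀ i)) =ᶠ[(D : Filter ι)] u :=
    (ltD_iff_eventually.1 (hug ξ₀)).mono fun _ hi => min_eq_left hi.le
  exact hno ⟨_, fun i => (min_le_right _ _).trans_lt (hgμ ξ₀ i),
    fun a => (hu a).trans_eventuallyLE hmin_eq.symm.le, fun ξ => hmin_eq.le.trans_ltD (hug ξ)⟩

theorem exists_forall_lt_of_mk_lt_cof {A : Type*} [LinearOrder A] {s : Set A}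
    (hs : #s < Order.cof A) : ∃ b, ∀ a ∈ s, a < b :=
  not_isCofinal_iff.1 fun h => (Order.cof_le h).not_gt hs

theorem exists_isCofinal_fiber_of_mk_lt_cof {A Z : Type u} [LinearOrder A] (k : A → Z)
    (hZ : #Z < Order.cof A) : ∃ z, IsCofinal (k ⁻¹' {z}) := by
  by_contra! h
  choose c hc using fun z => not_isCofinal_iff.1 (h z)
  obtain ⟨b, hb⟩ := exists_forall_lt_of_mk_lt_cof (s := range c) (mk_range_le.trans_lt hZ)
  exact (hc (k b) b rfl).not_gt (hb _ (mem_range_self _))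

theorem exists_forall_ge_eventuallyEq {A Z : Type u} {ι β : Type*} [LinearOrder A] [PartialOrder β]
    {l : Filter ι} {F : A → ι → β} (hF : ∀ a b, a ≤ b → F a ≤ᶠ[l] F b) (k : A → Z)
    (hk : ∀ a b, k a = k b → F a = F b) (hZ : #Z < Order.cof A) :
    ∃ a₀, ∀ b, a₀ ≤ b → F b =ᶠ[l] F a₀ := by
  have : Nonempty A := Order.cof_ne_zero_iff.1 (ne_bot_of_gt hZ)
  obtain ⟨z, hz⟩ := exists_isCofinal_fiber_of_mk_lt_cof k hZ
  obtain ⟨a₀, rfl, -⟩ := hz (Classical.arbitrary A)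
  refine ⟨a₀, fun b hb => ?_⟩
  obtain ⟨a₁, hk₁, hba₁⟩ := hz b
  exact ((hF b a₁ hba₁).trans (hk _ _ hk₁ ▸ EventuallyLE.rfl)).antisymm (hF a₀ b hb)

section roundUp

variable {ι : Type*} {S : ι → Set Ordinal.{w}} {h h' : ι → Ordinal.{w}} {i : ι}

noncomputable def roundUp (S : ι → Set Ordinal.{w}) (h : ι → Ordinal.{w}) (i : ι) : Ordinal.{w} :=
  sInf {x ∈ S i | h i ≤ x}

theorem roundUp_le {x : Ordinal} (hx : x ∈ S i) (hhx : h i ≤ x) : roundUp S h i ≤ x :=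
  csInf_le' ⟨hx, hhx⟩

theorem roundUp_mem_and_le (hS : ∃ x ∈ S i, h i ≤ x) : roundUp S h i ∈ S i ∧ h i ≤ roundUp S h i :=
  csInf_mem (s := {x ∈ S i | h i ≤ x}) hS

theorem roundUp_mono (hS : ∃ x ∈ S i, h' i ≤ x) (hh : h i ≤ h' i) :
    roundUp S h i ≤ roundUp S h' i :=
  roundUp_le (roundUp_mem_and_le hS).1 (hh.trans (roundUp_mem_and_le hS).2)

end roundUp

section candidates

variable {ι A Y : Type u} [LinearOrder A] {D : Ultrafilter ι} {f : A → ι → Ordinal.{w}}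
  {top : ι → Ordinal.{w}}

def candidates (top : ι → Ordinal.{w}) (N : Y → ι → Ordinal.{w}) (i : ι) : Set Ordinal.{w} :=
  range fun o : Option Y => o.elim (top i) (N · i)

theorem top_mem_candidates (N : Y → ι → Ordinal.{w}) (i : ι) : top i ∈ candidates top N i :=
  ⟨none, rfl⟩

theorem mem_candidates (N : Y → ι → Ordinal.{w}) (y : Y) (i : ι) : N y i ∈ candidates top N i :=
  ⟨some y, rfl⟩

def BelowRoundUp (D : Ultrafilter ι) (f : A → ι → Ordinal.{w}) (S : ι → Set Ordinal.{w})
    (v : ι → Ordinal.{w}) : Prop :=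
  (∀ a, ltD D (f a) v) ∧ ∃ a₀, ∀ b, a₀ ≤ b → ltD D v (roundUp S (f b))

theorem mk_pi_option_le [Infinite ι] (hY : #Y ≤ 2 ^ #ι) : #(ι → Option Y) ≤ 2 ^ #ι := by
  have h2ι : ℵ₀ ≤ 2 ^ #ι := (aleph0_le_mk ι).trans (cantor _).le
  calc #(ι → Option Y) = (#Y + 1) ^ #ι := by rw [← mk_option, power_def]
    _ ≤ (2 ^ #ι) ^ #ι := power_le_power_right ((add_le_add hY (one_le_aleph0.trans h2ι)).trans
        (add_eq_self h2ι).le)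
    _ = 2 ^ #ι := by rw [← power_mul, mul_eq_self (aleph0_le_mk ι)]

theorem exists_forall_ge_roundUp_eventuallyEq [Infinite ι] (hA : 2 ^ #ι < Order.cof A)
    (hfmono : ∀ a b, a < b → ltD D (f a) (f b)) (hftop : ∀ a i, f a i ≤ top i)
    (N : Y → ι → Ordinal.{w}) (hY : #Y ≤ 2 ^ #ι) :
    ∃ a₀, ∀ b, a₀ ≤ b →
      roundUp (candidates top N) (f b) =ᶠ[(D : Filter ι)] roundUp (candidates top N) (f a₀) := by
  have hS : ∀ a i, ∃ x ∈ candidates top N i, f a i ≤ x :=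
    fun a i => ⟨top i, top_mem_candidates N i, hftop a i⟩
  -- the value of `roundUp` at each coordinate is coded by an element of `Option Y`
  choose k hk using fun a i => (roundUp_mem_and_le (hS a i)).1
  refine exists_forall_ge_eventuallyEq (fun a b hab => ?_) k (fun a b hab => ?_)
    ((mk_pi_option_le hY).trans_lt hA)
  · rcases hab.eq_or_lt with rfl | hlt
    · exact EventuallyLE.rfl
    · exact (hfmono a b hlt).eventuallyLE.mono fun i hi => roundUp_mono (hS b i) hi
  · funext i
    rw [← hk a i, ← hk b i, hab]

theorem exists_belowRoundUp [Infinite ι] (hA : 2 ^ #ι < Order.cof A)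
    (hfmono : ∀ a b, a < b → ltD D (f a) (f b)) (hftop : ∀ a i, f a i ≤ top i)
    (hsmaller : ∀ u, (∀ a, ltD D (f a) u) → ∃ v, (∀ a, ltD D (f a) v) ∧ ltD D v u)
    (N : Y → ι → Ordinal.{w}) (hY : #Y ≤ 2 ^ #ι) :
    ∃ v, BelowRoundUp D f (candidates top N) v := by
  obtain ⟨a₀, ha₀⟩ := exists_forall_ge_roundUp_eventuallyEq hA hfmono hftop N hY
  have hub : ∀ a, ltD D (f a) (roundUp (candidates top N) (f a₀)) := by
    intro a
    obtain ⟨b, hb⟩ := exists_forall_lt_of_mk_lt_cof (s := {a, a₀})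
      (((toFinite _).lt_aleph0.trans_le ((aleph0_le_mk ι).trans (cantor _).le)).trans hA)
    have hfb : f b ≤ᶠ[(D : Filter ι)] roundUp (candidates top N) (f b) := .of_forall fun i =>
      (roundUp_mem_and_le ⟨top i, top_mem_candidates N i, hftop b i⟩).2
    exact (hfmono a b (hb a (by simp))).trans_eventuallyLE
      (hfb.trans (ha₀ b (hb a₀ (by simp)).le).le)
  obtain ⟨v, hv, hvlt⟩ := hsmaller _ hub
  exact ⟨v, hv, a₀, fun b hb => hvlt.trans_eventuallyLE (ha₀ b hb).symm.le⟩

variable {W : Type u} [LinearOrder W] [WellFoundedLT W]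

noncomputable def gapChain (D : Ultrafilter ι) (f : A → ι → Ordinal.{w}) (top : ι → Ordinal.{w}) :
    W → ι → Ordinal.{w} :=
  WellFoundedLT.fix fun x ih =>
    Classical.epsilon (BelowRoundUp D f (candidates top fun y : Iio x => ih y y.2))

theorem gapChain_eq (x : W) : gapChain D f top x = Classical.epsilon
    (BelowRoundUp D f (candidates top fun y : Iio x => gapChain D f top (y : W))) :=
  WellFoundedLT.fix_eq _ x

end candidates

theorem Set.finite_of_strictAntiOn {W β : Type*} [LinearOrder W] [WellFoundedLT W] [Preorder β]
    [WellFoundedLT β] {s : Set W} {φ : W → β} (hφ : StrictAntiOn φ s) : s.Finite := by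
  have : WellFoundedGT s := StrictAnti.wellFoundedGT (f := fun x : s => φ x)
    fun x y hxy => hφ x.2 y.2 hxy
  have := Finite.of_wellFoundedLT_wellFoundedGT s
  exact s.toFinite

theorem exists_minimal_upperBound {ι A : Type u} [LinearOrder A] [Infinite ι]
    {D : Ultrafilter ι} {f : A → ι → Ordinal.{w}} (hA : 2 ^ #ι < Order.cof A)
    (hfmono : ∀ a b, a < b → ltD D (f a) (f b)) {top : ι → Ordinal.{w}}
    (hftop : ∀ a i, f a i ≤ top i) :
    ∃ u, (∀ a, ltD D (f a) u) ∧ ∀ v, (∀ a, ltD D (f a) v) → ¬ ltD D v u := by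
  by_contra! hsmaller
  let W := (2 ^ #ι : Cardinal).ord.ToType
  have hW : #W = 2 ^ #ι := mk_ord_toType _
  let C : W → ι → Ordinal := gapChain D f top
  let S : W → ι → Set Ordinal := fun x => candidates top fun y : Iio x => C y
  have hC : ∀ x, BelowRoundUp D f (S x) (C x) := fun x => by
    rw [show C x = _ from gapChain_eq x]
    exact Classical.epsilon_spec
      (exists_belowRoundUp hA hfmono hftop hsmaller _ ((mk_subtype_le _).trans hW.le))
  choose th hth using fun x => (hC x).2
  obtain ⟨b, hb⟩ := exists_forall_lt_of_mk_lt_cof (s := range th) (mk_range_le.trans_lt (hW ▸ hA))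
  have hsep : ∀ x, ∃ i, f b i < C x i ∧ C x i < roundUp (S x) (f b) i := fun x =>
    ((ltD_iff_eventually.1 ((hC x).1 b)).and (hth x b (hb _ (mem_range_self x)).le)).exists
  choose i hi using hsep
  -- `C x` is a candidate at every later stage, so the roundings of `f b` drop at coordinate `i x`
  obtain ⟨i₀, hfib⟩ := exists_infinite_fiber' i (hW ▸ cantor #ι)
  refine infinite_coe_iff.1 hfib (finite_of_strictAntiOn (φ := fun x => roundUp (S x) (f b) i₀) ?_)
  rintro x rfl x' - hxx'
  exact (roundUp_le (mem_candidates _ ⟨x, hxx'⟩ _) (hi x).1.le).trans_lt (hi x).2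

theorem cut_first_cofinality_le_general (κ : Cardinal) (hκ : κ.IsRegular)
    (μ : κ.ord.ToType → Cardinal)
    (D : Ultrafilter κ.ord.ToType) (l₁ l₂ : Cardinal)
    (hl₁ : l₁.IsRegular) (hl₂ : l₂.IsRegular)
    (f : l₁.ord.ToType → κ.ord.ToType → Ordinal)
    (g : l₂.ord.ToType → κ.ord.ToType → Ordinal)
    (hcut : IsCut D μ l₁ l₂ f g) :
    l₁ ≤ (2 : Cardinal) ^ κ := by
  obtain ⟨hfμ, hgμ, hfmono, hgmono, hfg, hno⟩ := hcut
  by_contra! hlt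
  have : Infinite κ.ord.ToType := infinite_iff.2 ((mk_ord_toType κ).symm ▸ hκ.aleph0_le)
  have : Nonempty l₂.ord.ToType := mk_ne_zero_iff.1 ((mk_ord_toType l₂).symm ▸ hl₂.pos.ne')
  have : NoMaxOrder l₂.ord.ToType := noMaxOrder hl₂.aleph0_le
  have hA : 2 ^ #κ.ord.ToType < Order.cof l₁.ord.ToType := by
    rwa [mk_ord_toType, Ordinal.cof_toType, hl₁.cof_ord]
  obtain ⟨u, hu, hmin⟩ := exists_minimal_upperBound hA hfmono fun a i => (hfμ a i).le
  obtain ⟨v, hv, hvu⟩ := exists_smaller_upperBound_of_unfilled hgμ hgmono hfg hno hu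
  exact hmin v hv hvu

theorem cut_first_cofinality_le (κ : Cardinal) (hκ : κ.IsRegular)
    (μ : κ.ord.ToType → Cardinal) (hμ : ∀ i, (μ i).IsRegular)
    (D : Ultrafilter κ.ord.ToType) (l₁ l₂ : Cardinal)
    (hl₁ : l₁.IsRegular) (hl₂ : l₂.IsRegular)
    (f : l₁.ord.ToType → κ.ord.ToType → Ordinal)
    (g : l₂.ord.ToType → κ.ord.ToType → Ordinal)
    (hcut : IsCut D μ l₁ l₂ f g) :
    l₁ ≤ (2 : Cardinal) ^ κ :=
  cut_first_cofinality_le_general κ hκ μ D l₁ l₂ hl₁ hl₂ f g hcut
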